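/- Full support of eigenmeasures and comparison of eigenvalue with the growth rate: Assume hypothesis (I), let V : X → ℝ be continuous, and suppose λ₂ > 0 and μ is a Borel probability measure on X with Q^{V*} μ = λ₂·μ. Then the support of μ is all of X (i.e., μ(U) > 0 for every nonempty open U ⊆ X), and λ₂^n ≤ ‖Q_n^V 1‖_∞ for every n ∈ ℕ; in particular λ₂ ≤ λ₁, where λ₁ := inf_{n≥1} ‖Q_n^V 1‖_∞^{1/n}. -/

import Mathlib

open MeasureTheory Filter Topology
open scoped ENNReal NNReal

noncomputable def kIter {X : Type*} [MeasurableSpace X] (κ : X → Measure X) : ℕ → X → Measure X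
  | 0 => fun x => Measure.dirac x
  | n + 1 => fun x => (kIter κ n x).bind κ

noncomputable def FK {X : Type*} [MeasurableSpace X] (κ : X → Measure X) (V f : X → ℝ) (x : X) : ℝ :=
  ∫ y, Real.exp (V y) * f y ∂(κ x)

noncomputable def FKiter {X : Type*} [MeasurableSpace X] (κ : X → Measure X) (V : X → ℝ) :
    ℕ → (X → ℝ) → X → ℝ
  | 0 => fun f => f
  | n + 1 => fun f => FK κ V (FKiter κ V n f)

noncomputable def supNorm {X : Type*} (f : X → ℝ) : ℝ := ⨆ x, |f x|

noncomputable def lipConst {X : Type*} [MetricSpace X] (f : X → ℝ) : ℝ :=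
  sSup {c | ∃ x y, x ≠ y ∧ c = |f x - f y| / dist x y}

noncomputable def lipNorm {X : Type*} [MetricSpace X] (f : X → ℝ) : ℝ := supNorm f + lipConst f

noncomputable def FKdual {X : Type*} [MeasurableSpace X] (κ : X → Measure X) (V : X → ℝ)
    (σ : Measure X) : Measure X :=
  σ.bind fun x => (κ x).withDensity fun y => ENNReal.ofReal (Real.exp (V y))

/-!
Since `e^V > 0`, the one-step image `μκ` is absolutely continuous with respect to `Q^{V*}μ = λ₂μ`,
hence `μκ ≪ μ` and by iteration `μκ^N ≪ μ`. Under (I), `μκ^N` gives every ball of radius `ε` mass at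
least `p`, so `μ` cannot vanish on a nonempty open set.

The duality `∫ Q^V f dμ = ∫ f d(Q^{V*}μ)` gives `∫ Q_n^V 1 dμ = λ₂ⁿ`, which is at most
`‖Q_n^V 1‖_∞` because `μ` is a probability measure; taking `n`-th roots yields `λ₂ ≤ λ₁`.
-/

section Kernel

variable {X : Type*} [MeasurableSpace X] {κ : X → Measure X}

theorem measurable_kIter (hκ : Measurable κ) (n : ℕ) : Measurable (kIter κ n) := by
  induction n with
  | zero => exact Measure.measurable_dirac
  | succ n ih => exact (Measure.measurable_bind' hκ).comp ih

theorem bind_kIter_succ (hκ : Measurable κ) (μ : Measure X) (n : ℕ) :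
    μ.bind (kIter κ (n + 1)) = (μ.bind (kIter κ n)).bind κ :=
  (Measure.bind_bind (measurable_kIter hκ n).aemeasurable hκ.aemeasurable).symm

theorem bind_kIter_absolutelyContinuous (hκ : Measurable κ) {μ : Measure X}
    (h : μ.bind κ ≪ μ) (n : ℕ) : μ.bind (kIter κ n) ≪ μ := by
  induction n with
  | zero =>
    show μ.bind Measure.dirac ≪ μ
    rw [Measure.bind_dirac]
  | succ n ih =>
    rw [bind_kIter_succ hκ]
    exact (ih.comp_right (⟨κ, hκ⟩ : ProbabilityTheory.Kernel X X)).trans h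

theorem measure_pos_of_bind_absolutelyContinuous [MetricSpace X] [OpensMeasurableSpace X]
    (hκ : Measurable κ) (hI : ∀ ε : ℝ, 0 < ε → ∃ (N : ℕ) (p : ℝ≥0∞), 0 < p ∧
      ∀ x y : X, p < kIter κ N x (Metric.ball y ε))
    {μ : Measure X} [NeZero μ] (h : μ.bind κ ≪ μ) {U : Set X} (hU : IsOpen U)
    (hne : U.Nonempty) : 0 < μ U := by
  obtain ⟨y, hy⟩ := hne
  obtain ⟨ε, hε, hball⟩ := Metric.isOpen_iff.mp hU y hy
  obtain ⟨N, p, hp, hpball⟩ := hI ε hε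
  refine pos_iff_ne_zero.mpr fun hμU => ?_
  have hlower : p * μ Set.univ ≤ μ.bind (kIter κ N) U := by
    rw [Measure.bind_apply hU.measurableSet (measurable_kIter hκ N).aemeasurable,
      ← lintegral_const]
    exact lintegral_mono fun x => (hpball x y).le.trans (measure_mono hball)
  have hpos : 0 < p * μ Set.univ :=
    ENNReal.mul_pos hp.ne' (Measure.measure_univ_ne_zero.mpr (NeZero.ne μ))
  exact hpos.ne' (nonpos_iff_eq_zero.mp
    (hlower.trans_eq (bind_kIter_absolutelyContinuous hκ h N hμU)))

end Kernel

section FeynmanKac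

variable {X : Type*} [MeasurableSpace X] {κ : X → Measure X} {V : X → ℝ}

theorem measurable_withDensity_right (hκ : Measurable κ) {ρ : X → ℝ≥0∞} (hρ : Measurable ρ) :
    Measurable fun x => (κ x).withDensity ρ := by
  refine Measure.measurable_of_measurable_coe _ fun s hs => ?_
  simp_rw [withDensity_apply _ hs, ← lintegral_indicator hs]
  exact (Measure.measurable_lintegral (hρ.indicator hs)).comp hκ

theorem bind_absolutelyContinuous_FKdual (hκ : Measurable κ) (hV : Measurable V)
    (σ : Measure X) : σ.bind κ ≪ FKdual κ V σ := by
  have hρ : Measurable fun y => ENNReal.ofReal (Real.exp (V y)) := by fun_prop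
  refine Measure.AbsolutelyContinuous.comp_left (κ := ⟨κ, hκ⟩)
    (η := ⟨_, measurable_withDensity_right hκ hρ⟩) σ (ae_of_all _ fun x => ?_)
  exact withDensity_absolutelyContinuous' hρ.aemeasurable
    (ae_of_all _ fun y => ENNReal.ofReal_pos.mpr (Real.exp_pos _) |>.ne')

theorem ofReal_FK_eq_lintegral_withDensity (hV : Measurable V) {f : X → ℝ}
    (hf : Measurable f) (hf0 : 0 ≤ f) {x : X}
    (hint : Integrable (fun y => Real.exp (V y) * f y) (κ x)) :
    ENNReal.ofReal (FK κ V f x)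
      = ∫⁻ y, ENNReal.ofReal (f y) ∂((κ x).withDensity fun y => ENNReal.ofReal (Real.exp (V y))) := by
  rw [lintegral_withDensity_eq_lintegral_mul _ (by fun_prop) (by fun_prop), FK,
    ofReal_integral_eq_lintegral_ofReal hint
      (ae_of_all _ fun y => mul_nonneg (Real.exp_nonneg _) (hf0 y))]
  simp only [Pi.mul_apply, ENNReal.ofReal_mul (Real.exp_nonneg _)]

theorem lintegral_ofReal_FK (hκ : Measurable κ) (hV : Measurable V) {f : X → ℝ}
    (hf : Measurable f) (hf0 : 0 ≤ f)
    (hint : ∀ x, Integrable (fun y => Real.exp (V y) * f y) (κ x)) (σ : Measure X) :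
    ∫⁻ x, ENNReal.ofReal (FK κ V f x) ∂σ = ∫⁻ y, ENNReal.ofReal (f y) ∂(FKdual κ V σ) := by
  rw [FKdual, Measure.lintegral_bind (measurable_withDensity_right hκ (by fun_prop)).aemeasurable
    (by fun_prop)]
  simp_rw [ofReal_FK_eq_lintegral_withDensity hV hf hf0 (hint _)]

theorem FKiter_succ (n : ℕ) (f : X → ℝ) : FKiter κ V (n + 1) f = FK κ V (FKiter κ V n f) := rfl

theorem FKiter_nonneg {f : X → ℝ} (hf0 : 0 ≤ f) (n : ℕ) : 0 ≤ FKiter κ V n f := by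
  induction n with
  | zero => exact hf0
  | succ n ih => exact fun x => integral_nonneg fun y => mul_nonneg (Real.exp_nonneg _) (ih y)

theorem continuous_FKiter [TopologicalSpace X]
    (hFeller : ∀ f : X → ℝ, Continuous f → Continuous fun x => ∫ y, f y ∂(κ x))
    (hV : Continuous V) {f : X → ℝ} (hf : Continuous f) (n : ℕ) :
    Continuous (FKiter κ V n f) := by
  induction n with
  | zero => exact hf
  | succ n ih => exact hFeller _ ((Real.continuous_exp.comp hV).mul ih)

theorem lintegral_ofReal_FKiter_one_of_FKdual_eq [TopologicalSpace X] [CompactSpace X]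
    [OpensMeasurableSpace X] (hκ : Measurable κ) (hκfin : ∀ x, IsFiniteMeasure (κ x))
    (hFeller : ∀ f : X → ℝ, Continuous f → Continuous fun x => ∫ y, f y ∂(κ x))
    (hV : Continuous V) {μ : Measure X} [IsProbabilityMeasure μ] {lam : ℝ≥0∞}
    (heig : FKdual κ V μ = lam • μ) (n : ℕ) :
    ∫⁻ x, ENNReal.ofReal (FKiter κ V n 1 x) ∂μ = lam ^ n := by
  induction n with
  | zero => simp [FKiter]
  | succ n ih =>
    have hcont := continuous_FKiter hFeller hV continuous_const n (f := 1)
    have hint x : Integrable (fun y => Real.exp (V y) * FKiter κ V n 1 y) (κ x) :=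
      ((Real.continuous_exp.comp hV).mul hcont).integrable_of_hasCompactSupport
        (HasCompactSupport.of_compactSpace _)
    rw [FKiter_succ, lintegral_ofReal_FK hκ hV.measurable hcont.measurable
      (FKiter_nonneg zero_le_one n) hint, heig, lintegral_smul_measure, ih, pow_succ, smul_eq_mul,
      mul_comm]

end FeynmanKac

theorem le_supNorm {X : Type*} {f : X → ℝ} (hf : BddAbove (Set.range fun x => |f x|)) (x : X) :
    f x ≤ supNorm f :=
  (le_abs_self _).trans (le_ciSup hf x)

theorem supNorm_nonneg {X : Type*} (f : X → ℝ) : 0 ≤ supNorm f :=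
  Real.iSup_nonneg fun x => abs_nonneg (f x)

theorem pow_le_supNorm_of_lintegral_eq {X : Type*} [MeasurableSpace X] {μ : Measure X}
    [IsProbabilityMeasure μ] {f : X → ℝ} (hf : BddAbove (Set.range fun x => |f x|)) {a : ℝ}
    (ha : 0 ≤ a) {n : ℕ} (h : ∫⁻ x, ENNReal.ofReal (f x) ∂μ = ENNReal.ofReal a ^ n) :
    a ^ n ≤ supNorm f := by
  rw [← ENNReal.ofReal_le_ofReal_iff (supNorm_nonneg f), ENNReal.ofReal_pow ha, ← h]
  calc ∫⁻ x, ENNReal.ofReal (f x) ∂μ ≤ ∫⁻ _, ENNReal.ofReal (supNorm f) ∂μ :=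
        lintegral_mono fun x => ENNReal.ofReal_le_ofReal (le_supNorm hf x)
    _ = ENNReal.ofReal (supNorm f) := by simp

theorem le_iInf_rpow_inv_of_pow_le {a : ℝ} (ha : 0 ≤ a) {b : ℕ → ℝ} (h : ∀ n, a ^ n ≤ b n) :
    a ≤ ⨅ n : {n : ℕ // 1 ≤ n}, b n ^ ((n : ℕ) : ℝ)⁻¹ := by
  refine le_ciInf fun ⟨n, hn⟩ => ?_
  calc a = (a ^ n) ^ (n : ℝ)⁻¹ := (Real.pow_rpow_inv_natCast ha (by omega)).symm
    _ ≤ b n ^ (n : ℝ)⁻¹ := Real.rpow_le_rpow (pow_nonneg ha n) (h n) (by positivity)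

/-- Full support of eigenmeasures and comparison of the eigenvalue with
the growth rate: if `Q^{V*} μ = λ₂·μ` with `λ₂ > 0`, then `μ` has full support,
`λ₂ⁿ ≤ ‖Q_n^V 1‖_∞` for all `n`, and `λ₂ ≤ λ₁ = inf_{n≥1} ‖Q_n^V 1‖_∞^{1/n}`. -/
theorem FKdual_eigenmeasure_full_support
    {X : Type*} [MetricSpace X] [CompactSpace X] [MeasurableSpace X] [BorelSpace X]
    (κ : X → Measure X) (hκmeas : Measurable κ)
    (hκprob : ∀ x, IsProbabilityMeasure (κ x))
    (hFeller : ∀ f : X → ℝ, Continuous f → Continuous fun x => ∫ y, f y ∂(κ x))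
    -- hypothesis (I): uniform irreducibility
    (hI : ∀ ε : ℝ, 0 < ε → ∃ (N : ℕ) (p : ℝ≥0∞), 0 < p ∧
      ∀ x y : X, p < kIter κ N x (Metric.ball y ε))
    (V : X → ℝ) (hV : Continuous V)
    (lam2 : ℝ) (hlam2 : 0 < lam2)
    (μ : Measure X) (hμ : IsProbabilityMeasure μ)
    (heig : FKdual κ V μ = ENNReal.ofReal lam2 • μ) :
    (∀ U : Set X, IsOpen U → U.Nonempty → 0 < μ U) ∧
    (∀ n : ℕ, lam2 ^ n ≤ supNorm (FKiter κ V n 1)) ∧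
    lam2 ≤ ⨅ n : {n : ℕ // 1 ≤ n}, supNorm (FKiter κ V (n : ℕ) 1) ^ (((n : ℕ) : ℝ)⁻¹) := by
  have hsub : μ.bind κ ≪ μ :=
    (bind_absolutelyContinuous_FKdual hκmeas hV.measurable μ).trans
      (heig ▸ Measure.smul_absolutelyContinuous)
  have hgrowth (n : ℕ) : lam2 ^ n ≤ supNorm (FKiter κ V n 1) :=
    pow_le_supNorm_of_lintegral_eq
      (isCompact_range (continuous_FKiter hFeller hV continuous_const n).abs).bddAbove hlam2.le
      (lintegral_ofReal_FKiter_one_of_FKdual_eq hκmeas (fun x => inferInstance) hFeller hV heig n)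
  exact ⟨fun U hU hne => measure_pos_of_bind_absolutelyContinuous hκmeas hI hsub hU hne,
    hgrowth, le_iInf_rpow_inv_of_pow_le hlam2.le hgrowth⟩
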